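/- The 5×5 matrix U₅ with columns uₖ = (1/√5)·(1, −κ ω₅ᵏ, λ ω₅^{2k}, κ ω₅^{3k}, ω₅^{4k}) for k = 0,…,4, where ω₅ = e^{2πi/5}, κ = (1 + i√15)/4 and λ is a square root of −κ, is unitary. -/

import Mathlib

open Matrix Complex

noncomputable def omega5 : ℂ := Complex.exp (2 * Real.pi * Complex.I / 5)

noncomputable def kappa5 : ℂ := (1 + Complex.I * Real.sqrt 15) / 4

/-- The matrix U₅ with columns uₖ = (1/√5)(1, −κω₅ᵏ, λω₅²ᵏ, κω₅³ᵏ, ω₅⁴ᵏ). -/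
noncomputable def U5 (lam : ℂ) : Matrix (Fin 5) (Fin 5) ℂ :=
  fun i k => (1 / Real.sqrt 5 : ℂ) * (![1, -kappa5, lam, kappa5, 1] i) * omega5 ^ ((i : ℕ) * (k : ℕ))

/-!
`U5 λ` factors as `D * F`, where `D` is the diagonal matrix of the coefficients
`1, -κ, λ, κ, 1` and `F` is the normalised discrete Fourier transform matrix on `ω₅`. The
coefficients have modulus one (`|κ|² = (1 + 15) / 16` and `|λ|² = |κ|`), so `D` is unitary, and
`F` is unitary because the geometric sum of a fifth root of unity `≠ 1` vanishes.
-/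

open Finset

theorem geom_sum_eq_ite_of_pow_eq_one {K : Type*} [Field K] [DecidableEq K] {z : K} {n : ℕ}
    (hz : z ^ n = 1) : ∑ i ∈ range n, z ^ i = if z = 1 then (n : K) else 0 := by
  split_ifs with h
  · simp [h]
  · rw [geom_sum_eq h, hz, sub_self, zero_div]

theorem IsPrimitiveRoot.sum_range_pow_mul_inv_pow {K : Type*} [Field K] [DecidableEq K] {ζ : K}
    {n : ℕ} (hζ : IsPrimitiveRoot ζ n) {k l : ℕ} (hk : k < n) (hl : l < n) :
    ∑ i ∈ range n, (ζ ^ l * (ζ ^ k)⁻¹) ^ i = if k = l then (n : K) else 0 := by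
  have hζ0 : ζ ≠ 0 := hζ.ne_zero (by omega)
  have hpow : (ζ ^ l * (ζ ^ k)⁻¹) ^ n = 1 := by
    rw [mul_pow, inv_pow, ← pow_mul, ← pow_mul, pow_mul', pow_mul' ζ k, hζ.pow_eq_one,
      one_pow, one_pow, inv_one, mul_one]
  rw [geom_sum_eq_ite_of_pow_eq_one hpow]
  refine if_congr ?_ rfl rfl
  rw [mul_inv_eq_one₀ (pow_ne_zero _ hζ0)]
  exact ⟨fun h => (hζ.pow_inj hl hk h).symm, fun h => h ▸ rfl⟩

theorem Complex.mem_unitary_iff_norm_eq_one {z : ℂ} : z ∈ unitary ℂ ↔ ‖z‖ = 1 := by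
  rw [Unitary.mem_iff_star_mul_self, star_def, conj_mul']
  norm_cast
  exact pow_eq_one_iff_of_nonneg (norm_nonneg z) two_ne_zero

namespace Matrix

theorem diagonal_mem_unitaryGroup {n α : Type*} [Fintype n] [DecidableEq n] [CommRing α]
    [StarRing α] {d : n → α} (hd : ∀ i, d i ∈ unitary α) :
    diagonal d ∈ unitaryGroup n α := by
  rw [mem_unitaryGroup_iff', star_eq_conjTranspose, diagonal_conjTranspose,
    diagonal_mul_diagonal, ← diagonal_one]
  exact congrArg diagonal (funext fun i => Unitary.star_mul_self_of_mem (hd i))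

noncomputable def dft (n : ℕ) (ζ : ℂ) : Matrix (Fin n) (Fin n) ℂ :=
  of fun i k => ζ ^ ((i : ℕ) * k) / Real.sqrt n

theorem dft_mem_unitaryGroup {n : ℕ} {ζ : ℂ} (hζ : IsPrimitiveRoot ζ n) :
    dft n ζ ∈ unitaryGroup (Fin n) ℂ := by
  rw [mem_unitaryGroup_iff']
  ext k l
  have hn : n ≠ 0 := Fin.pos_iff_nonempty.mpr ⟨k⟩ |>.ne'
  have hconj : star ζ = ζ⁻¹ :=
    (Complex.inv_eq_conj (Complex.norm_eq_one_of_pow_eq_one hζ.pow_eq_one hn)).symm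
  have hsqrt : ((Real.sqrt n : ℝ) : ℂ) * Real.sqrt n = n := by
    rw [← Complex.ofReal_mul, Real.mul_self_sqrt n.cast_nonneg, Complex.ofReal_natCast]
  have hterm : ∀ i : Fin n, star (dft n ζ) k i * dft n ζ i l =
      (ζ ^ (l : ℕ) * (ζ ^ (k : ℕ))⁻¹) ^ (i : ℕ) / n := by
    intro i
    simp only [dft, star_apply, of_apply, star_div₀, star_pow, hconj, Complex.star_def,
      Complex.conj_ofReal]
    rw [← hsqrt]
    ring
  rw [mul_apply, sum_congr rfl fun i _ => hterm i, ← sum_div,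
    Fin.sum_univ_eq_sum_range (fun i => (ζ ^ (l : ℕ) * (ζ ^ (k : ℕ))⁻¹) ^ i),
    hζ.sum_range_pow_mul_inv_pow k.2 l.2, one_apply]
  simp only [Fin.val_inj]
  split_ifs <;> simp [hn]

end Matrix

theorem isPrimitiveRoot_omega5 : IsPrimitiveRoot omega5 5 := by
  simpa [omega5] using Complex.isPrimitiveRoot_exp 5 (by norm_num)

theorem norm_kappa5 : ‖kappa5‖ = 1 := by
  have h15 : ((Real.sqrt 15 : ℝ) : ℂ) ^ 2 = 15 := by
    rw [← ofReal_pow, Real.sq_sqrt (by norm_num)]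
    norm_num
  rw [← mem_unitary_iff_norm_eq_one, Unitary.mem_iff_star_mul_self]
  simp only [kappa5, star_div₀, star_add, star_mul', star_one, Complex.star_def, conj_I,
    conj_ofReal, star_ofNat]
  linear_combination (1 / 16 : ℂ) * h15 - ((Real.sqrt 15 : ℝ) : ℂ) ^ 2 / 16 * I_sq

theorem U5_eq_diagonal_mul_dft (lam : ℂ) :
    U5 lam = diagonal ![1, -kappa5, lam, kappa5, 1] * dft 5 omega5 := by
  ext i k
  rw [diagonal_mul, U5, dft, of_apply]
  push_cast
  ring

theorem U5_unitary (lam : ℂ) (hlam : lam ^ 2 = -kappa5) :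
    U5 lam ∈ Matrix.unitaryGroup (Fin 5) ℂ := by
  have hlam_norm : ‖lam‖ = 1 := by
    rw [← pow_eq_one_iff_of_nonneg (norm_nonneg lam) two_ne_zero, ← norm_pow, hlam, norm_neg,
      norm_kappa5]
  rw [U5_eq_diagonal_mul_dft]
  refine mul_mem (diagonal_mem_unitaryGroup fun i => ?_)
    (dft_mem_unitaryGroup isPrimitiveRoot_omega5)
  rw [mem_unitary_iff_norm_eq_one]
  fin_cases i <;> simp [norm_kappa5, hlam_norm]
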